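/- Funnel is superadditive under interleaving of disjoint key ranges: let P be a finite point set with distinct y-coordinates, and suppose P = P_L ∪ P_R where every point of P_L has strictly smaller x-coordinate than every point of P_R. Then Funnel(P) ≥ Funnel(P_L) + Funnel(P_R). -/

import Mathlib

/-- Number of maximal blocks of equal symbols in a string over `{L,R}` (as `Bool`s). -/
def blocks : List Bool → ℕ
  | [] => 0
  | [_] => 1
  | a :: b :: l => (if a = b then 0 else 1) + blocks (b :: l)

/-- The labeled merge of two finite sets of reals: sort `L ∪ R` increasingly and
label each element by whether it came from `L` (`true`) or not. -/
noncomputable def mix (L R : Finset ℝ) : List Bool :=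
  ((L ∪ R).sort (· ≤ ·)).map (fun x => decide (x ∈ L))

/-- `mixValue L R` is the number of maximal same-origin blocks in the merged sorted sequence. -/
noncomputable def mixValue (L R : Finset ℝ) : ℕ := blocks (mix L R)
/-- Membership in the minimal axis-aligned rectangle spanned by `p` and `q`. -/
def inRect (p q t : ℝ × ℝ) : Prop :=
  min p.1 q.1 ≤ t.1 ∧ t.1 ≤ max p.1 q.1 ∧ min p.2 q.2 ≤ t.2 ∧ t.2 ≤ max p.2 q.2

noncomputable instance (p q t : ℝ × ℝ) : Decidable (inRect p q t) := by
  unfold inRect; infer_instance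

/-- The left funnel of `p` within `P`. -/
noncomputable def FL (P : Finset (ℝ × ℝ)) (p : ℝ × ℝ) : Finset (ℝ × ℝ) :=
  P.filter (fun q => q.2 < p.2 ∧ q.1 < p.1 ∧ ∀ t ∈ P, inRect p q t → t = p ∨ t = q)

/-- The right funnel of `p` within `P`. -/
noncomputable def FR (P : Finset (ℝ × ℝ)) (p : ℝ × ℝ) : Finset (ℝ × ℝ) :=
  P.filter (fun q => q.2 < p.2 ∧ q.1 > p.1 ∧ ∀ t ∈ P, inRect p q t → t = p ∨ t = q)

/-- The funnel contribution `f(P,p)`. -/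
noncomputable def fContrib (P : Finset (ℝ × ℝ)) (p : ℝ × ℝ) : ℕ :=
  mixValue ((FL P p).image Prod.snd) ((FR P p).image Prod.snd)

/-- Wilber's Funnel bound. -/
noncomputable def Funnel (P : Finset (ℝ × ℝ)) : ℕ := ∑ p ∈ P, fContrib P p

/-- All points of `P` have distinct `y`-coordinates. -/
def DistinctY (P : Finset (ℝ × ℝ)) : Prop :=
  ∀ p ∈ P, ∀ q ∈ P, p.2 = q.2 → p = q

/-- All points of `P` have distinct `x`-coordinates. -/
def DistinctX (P : Finset (ℝ × ℝ)) : Prop :=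
  ∀ p ∈ P, ∀ q ∈ P, p.1 = q.1 → p = q

/-!
No point of `P_R` lies in a rectangle spanned by two points of `P_L`, so for `p ∈ P_L` every
funnel point of `p` in `P_L` is still one in `P`; symmetrically for `P_R`. Since left and right
funnel points have distinct `y`-values, enlarging both funnels only inserts symbols into the
labelled merge, and inserting symbols never decreases the number of blocks. Hence
`f(P_L, p) ≤ f(P, p)` and `f(P_R, p) ≤ f(P, p)`; sum over the disjoint union `P_L ∪ P_R`.
-/

lemma blocks_le_blocks_cons (a : Bool) (l : List Bool) : blocks l ≤ blocks (a :: l) := by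
  cases l with
  | nil => simp [blocks]
  | cons b t => simp only [blocks]; split <;> omega

lemma blocks_cons_le_blocks_cons_add_one (a b : Bool) (l : List Bool) :
    blocks (a :: l) ≤ blocks (b :: l) + 1 := by
  cases l with
  | nil => simp [blocks]
  | cons c t => simp only [blocks]; split <;> split <;> omega

lemma blocks_cons_le_of_sublist {l₁ l₂ : List Bool} (h : l₁.Sublist l₂) (a : Bool) :
    blocks (a :: l₁) ≤ blocks (a :: l₂) := by
  induction h generalizing a with
  | slnil => exact le_rfl
  | @cons l₁ l₂ b _ ih =>
    by_cases hab : a = b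
    · subst hab
      calc blocks (a :: l₁) ≤ blocks (a :: l₂) := ih a
        _ ≤ blocks (a :: a :: l₂) := blocks_le_blocks_cons a _
    · calc blocks (a :: l₁) ≤ blocks (b :: l₁) + 1 := blocks_cons_le_blocks_cons_add_one a b l₁
        _ ≤ blocks (b :: l₂) + 1 := Nat.add_le_add_right (ih b) 1
        _ = blocks (a :: b :: l₂) := by simp [blocks, hab, Nat.add_comm]
  | @cons_cons l₁ l₂ b _ ih =>
    simp only [blocks]
    exact Nat.add_le_add_left (ih b) _

lemma blocks_le_of_sublist {l₁ l₂ : List Bool} (h : l₁.Sublist l₂) : blocks l₁ ≤ blocks l₂ := by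
  induction h with
  | slnil => exact le_rfl
  | @cons l₁ l₂ b _ ih => exact ih.trans (blocks_le_blocks_cons b l₂)
  | @cons_cons l₁ l₂ b h _ => exact blocks_cons_le_of_sublist h b

lemma mixValue_mono {A A' B B' : Finset ℝ} (hA : A ⊆ A') (hB : B ⊆ B') (hd : Disjoint A' B) :
    mixValue A B ≤ mixValue A' B' := by
  have hsort : ((A ∪ B).sort (· ≤ ·)).Sublist ((A' ∪ B').sort (· ≤ ·)) :=
    List.sublist_of_subperm_of_pairwise
      (List.subperm_of_subset (Finset.sort_nodup _ _) fun x hx => by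
        rw [Finset.mem_sort] at hx ⊢
        exact Finset.union_subset_union hA hB hx)
      (Finset.pairwise_sort _ _) (Finset.pairwise_sort _ _)
  have hlabel : mix A B = ((A ∪ B).sort (· ≤ ·)).map (fun x => decide (x ∈ A')) := by
    refine List.map_congr_left fun x hx => ?_
    rcases Finset.mem_union.1 ((Finset.mem_sort _).1 hx) with h | h
    · simp [h, hA h]
    · have h' : x ∉ A' := Finset.disjoint_right.1 hd h
      have hxA : x ∉ A := fun hxA => h' (hA hxA)
      simp [h', hxA]
  unfold mixValue
  rw [hlabel]
  exact blocks_le_of_sublist (hsort.map _)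

lemma disjoint_FL_FR (P : Finset (ℝ × ℝ)) (p : ℝ × ℝ) : Disjoint (FL P p) (FR P p) := by
  rw [FL, FR, Finset.disjoint_filter]
  exact fun q _ hL hR => lt_asymm hL.2.1 hR.2.1

lemma disjoint_image_snd_FL_FR {P : Finset (ℝ × ℝ)} (hY : DistinctY P) (p : ℝ × ℝ) :
    Disjoint ((FL P p).image Prod.snd) ((FR P p).image Prod.snd) := by
  rw [Finset.disjoint_left]
  rintro _ hL hR
  obtain ⟨q, hq, rfl⟩ := Finset.mem_image.1 hL
  obtain ⟨r, hr, hrq⟩ := Finset.mem_image.1 hR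
  have hrP : r ∈ P := Finset.filter_subset _ _ hr
  have hqP : q ∈ P := Finset.filter_subset _ _ hq
  rw [hY r hrP q hqP hrq] at hr
  exact Finset.disjoint_left.1 (disjoint_FL_FR P p) hq hr

def IsRectClosedIn (Q P : Finset (ℝ × ℝ)) : Prop :=
  ∀ p ∈ Q, ∀ q ∈ Q, ∀ t ∈ P, inRect p q t → t ∈ Q

section RectClosed

variable {Q P : Finset (ℝ × ℝ)} {p : ℝ × ℝ}

lemma FL_subset_FL (hQP : Q ⊆ P) (hclosed : IsRectClosedIn Q P) (hp : p ∈ Q) :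
    FL Q p ⊆ FL P p := by
  intro q hq
  simp only [FL, Finset.mem_filter] at hq ⊢
  obtain ⟨hqQ, hy, hx, hempty⟩ := hq
  exact ⟨hQP hqQ, hy, hx, fun t ht hrect => hempty t (hclosed p hp q hqQ t ht hrect) hrect⟩

lemma FR_subset_FR (hQP : Q ⊆ P) (hclosed : IsRectClosedIn Q P) (hp : p ∈ Q) :
    FR Q p ⊆ FR P p := by
  intro q hq
  simp only [FR, Finset.mem_filter] at hq ⊢
  obtain ⟨hqQ, hy, hx, hempty⟩ := hq
  exact ⟨hQP hqQ, hy, hx, fun t ht hrect => hempty t (hclosed p hp q hqQ t ht hrect) hrect⟩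

lemma fContrib_le_fContrib (hQP : Q ⊆ P) (hclosed : IsRectClosedIn Q P) (hY : DistinctY P)
    (hp : p ∈ Q) : fContrib Q p ≤ fContrib P p :=
  mixValue_mono (Finset.image_subset_image (FL_subset_FL hQP hclosed hp))
    (Finset.image_subset_image (FR_subset_FR hQP hclosed hp))
    ((disjoint_image_snd_FL_FR hY p).mono_right
      (Finset.image_subset_image (FR_subset_FR hQP hclosed hp)))

end RectClosed

section VerticalSplit

variable {PL PR : Finset (ℝ × ℝ)}

lemma isRectClosedIn_union_left (hx : ∀ pl ∈ PL, ∀ pr ∈ PR, pl.1 < pr.1) :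
    IsRectClosedIn PL (PL ∪ PR) := by
  intro p hp q hq t ht hrect
  refine (Finset.mem_union.1 ht).resolve_right fun htR => ?_
  exact (max_lt (hx p hp t htR) (hx q hq t htR)).not_ge hrect.2.1

lemma isRectClosedIn_union_right (hx : ∀ pl ∈ PL, ∀ pr ∈ PR, pl.1 < pr.1) :
    IsRectClosedIn PR (PL ∪ PR) := by
  intro p hp q hq t ht hrect
  refine (Finset.mem_union.1 ht).resolve_left fun htL => ?_
  exact (lt_min (hx t htL p hp) (hx t htL q hq)).not_ge hrect.1

end VerticalSplit

theorem funnel_superadditive_interleave (P PL PR : Finset (ℝ × ℝ))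
    (hunion : P = PL ∪ PR)
    (hx : ∀ pl ∈ PL, ∀ pr ∈ PR, pl.1 < pr.1)
    (hY : DistinctY P) :
    Funnel P ≥ Funnel PL + Funnel PR := by
  subst hunion
  have hdisj : Disjoint PL PR :=
    Finset.disjoint_left.2 fun a haL haR => lt_irrefl _ (hx a haL a haR)
  rw [ge_iff_le, Funnel, Funnel, Funnel, Finset.sum_union hdisj]
  exact add_le_add
    (Finset.sum_le_sum fun p hp =>
      fContrib_le_fContrib Finset.subset_union_left (isRectClosedIn_union_left hx) hY hp)
    (Finset.sum_le_sum fun p hp =>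
      fContrib_le_fContrib Finset.subset_union_right (isRectClosedIn_union_right hx) hY hp)
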